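/- arXiv:2402.07471 — 3 statements merged into one kernel-verified Lean document; each statement's English description precedes it below -/
import Mathlib

section
/- Let W be an n×n real symmetric doubly stochastic irreducible aperiodic transition matrix with spectral decomposition W = (1/n)𝟙𝟙ᵀ + ∑_{j≥2} λ_j φ_j φ_jᵀ where |λ_j| < 1 for j ≥ 2. Then for any vertices u, v and any T ≥ 1, ∑_{t=1}^T (W^t)_{uv}/t ≤ (1/n)·∑_{t=1}^T 1/t − (ln(I − W + (1/n)𝟙𝟙ᵀ))_{uv} + λ₂^{T}·n/(1−λ₂), where λ₂ = max_{j≥2} |λ_j| < 1. -/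
/-!
Expanding `W ^ t = ∑ⱼ λⱼ ^ t φⱼ φⱼᵀ` turns the left-hand side into
`∑ⱼ φⱼ(u) φⱼ(v) ∑_{t ≤ T} λⱼ ^ t / t`, and the logarithm term into `∑_{j ≠ j₀} φⱼ(u) φⱼ(v) log (1 - λⱼ)`.
The eigenvalue `λ_{j₀} = 1` with `φ_{j₀} = 𝟙/√n` contributes the harmonic term exactly, while for
every other `j` the truncated series `∑_{t ≤ T} λⱼ ^ t / t` differs from `-log (1 - λⱼ)` by at most
`|λⱼ| ^ (T + 1) / (1 - |λⱼ|) ≤ l₂ ^ T / (1 - l₂)`; the weights `|φⱼ(u) φⱼ(v)|` are at most `1` since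
`φⱼ` is a unit vector.
-/

open Matrix Finset

namespace Matrix

variable {m ι R : Type*} [Fintype ι]

def spectralSum [Semiring R] (c : ι → R) (phi : ι → m → R) : Matrix m m R :=
  ∑ j, c j • vecMulVec (phi j) (phi j)

theorem spectralSum_apply [Semiring R] (c : ι → R) (phi : ι → m → R) (u v : m) :
    spectralSum c phi u v = ∑ j, c j * (phi j u * phi j v) := by
  simp only [spectralSum, sum_apply, smul_apply, vecMulVec_apply, smul_eq_mul]

variable [Fintype m] [DecidableEq m]

section CommSemiring

variable [CommSemiring R] [DecidableEq ι] {phi : ι → m → R}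

theorem spectralSum_mul_spectralSum
    (horth : ∀ j j', phi j ⬝ᵥ phi j' = if j = j' then (1 : R) else 0) (a b : ι → R) :
    spectralSum a phi * spectralSum b phi = spectralSum (a * b) phi := by
  simp only [spectralSum, sum_mul, mul_sum, smul_mul_smul_comm, vecMulVec_mul_vecMulVec, horth,
    ite_smul, one_smul, zero_smul]
  refine sum_congr rfl fun j _ => ?_
  rw [sum_eq_single j (fun k _ hk => by simp [hk]) (by simp)]
  simp

theorem spectralSum_pow
    (horth : ∀ j j', phi j ⬝ᵥ phi j' = if j = j' then (1 : R) else 0) (c : ι → R) :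
    ∀ t, t ≠ 0 → spectralSum c phi ^ t = spectralSum (c ^ t) phi
  | 1, _ => by rw [pow_one, pow_one]
  | t + 2, _ => by
    rw [pow_succ, spectralSum_pow horth c (t + 1) t.succ_ne_zero,
      spectralSum_mul_spectralSum horth, ← pow_succ]

end CommSemiring

theorem sum_Icc_spectralSum_pow_apply_div [Field R] [DecidableEq ι]
    {phi : ι → m → R} (horth : ∀ j j', phi j ⬝ᵥ phi j' = if j = j' then (1 : R) else 0)
    (c : ι → R) (u v : m) (T : ℕ) :
    ∑ t ∈ Icc 1 T, (spectralSum c phi ^ t) u v / t =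
      ∑ j, phi j u * phi j v * ∑ t ∈ Icc 1 T, c j ^ t / t := by
  simp_rw [mul_sum]
  rw [sum_comm]
  refine sum_congr rfl fun t ht => ?_
  rw [spectralSum_pow horth c t (by grind), spectralSum_apply, sum_div]
  refine sum_congr rfl fun j _ => ?_
  simp only [Pi.pow_apply]
  ring

end Matrix

theorem abs_mul_apply_le_one_of_dotProduct_self_eq_one {m : Type*} [Fintype m] {x : m → ℝ}
    (hx : x ⬝ᵥ x = 1) (u v : m) : |x u * x v| ≤ 1 := by
  have hsq (a : m) : |x a| ≤ 1 := by
    rw [abs_le_one_iff_mul_self_le_one, ← hx]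
    exact single_le_sum (f := fun k => x k * x k) (fun k _ => mul_self_nonneg _) (mem_univ a)
  rw [abs_mul]
  exact mul_le_one₀ (hsq u) (abs_nonneg _) (hsq v)

namespace Real

theorem abs_sum_Icc_pow_div_add_log_le {x : ℝ} (hx : |x| < 1) (T : ℕ) :
    |∑ t ∈ Icc 1 T, x ^ t / t + log (1 - x)| ≤ |x| ^ (T + 1) / (1 - |x|) := by
  have hshift : ∑ t ∈ Icc 1 T, x ^ t / t = ∑ i ∈ range T, x ^ (i + 1) / (i + 1) := by
    induction T with
    | zero => simp
    | succ T ih => rw [sum_Icc_succ_top (by omega), ih, sum_range_succ, Nat.cast_succ]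
  rw [hshift]
  exact abs_log_sub_add_sum_range_le hx T

theorem abs_sum_Icc_pow_div_add_log_le_of_abs_le {x l : ℝ} (hxl : |x| ≤ l) (hl : l < 1)
    (T : ℕ) : |∑ t ∈ Icc 1 T, x ^ t / t + log (1 - x)| ≤ l ^ T / (1 - l) := by
  have hl0 : 0 ≤ l := (abs_nonneg x).trans hxl
  calc _ ≤ |x| ^ (T + 1) / (1 - |x|) := abs_sum_Icc_pow_div_add_log_le (hxl.trans_lt hl) T
    _ ≤ l ^ T / (1 - l) := by
      gcongr
      calc |x| ^ (T + 1) ≤ l ^ (T + 1) := by gcongr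
        _ ≤ l ^ T := pow_le_pow_of_le_one hl0 hl.le T.le_succ

end Real

theorem mul_apply_mul_sum_Icc_pow_div_add_log_le {m : Type*} [Fintype m] {x : m → ℝ}
    (hx : x ⬝ᵥ x = 1) (u v : m) {c l : ℝ} (hcl : |c| ≤ l) (hl : l < 1) (T : ℕ) :
    x u * x v * (∑ t ∈ Icc 1 T, c ^ t / t + Real.log (1 - c)) ≤ l ^ T / (1 - l) :=
  calc _ ≤ |x u * x v| * |∑ t ∈ Icc 1 T, c ^ t / t + Real.log (1 - c)| :=
        (le_abs_self _).trans (abs_mul _ _).le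
    _ ≤ 1 * (l ^ T / (1 - l)) := by
      gcongr
      · exact abs_mul_apply_le_one_of_dotProduct_self_eq_one hx u v
      · exact Real.abs_sum_Icc_pow_div_add_log_le_of_abs_le hcl hl T
    _ = _ := one_mul _

open Matrix in
theorem walk_partial_sum_bound_general (n : ℕ)
    (W : Matrix (Fin n) (Fin n) ℝ) (lam : Fin n → ℝ)
    (phi : Fin n → Fin n → ℝ) (j0 : Fin n)
    (hspec : W = ∑ j : Fin n, lam j • Matrix.vecMulVec (phi j) (phi j))
    (horth : ∀ j j' : Fin n, phi j ⬝ᵥ phi j' = if j = j' then (1 : ℝ) else 0)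
    (hl0 : lam j0 = 1)
    (hphi0 : phi j0 = fun _ => 1 / Real.sqrt n)
    (l2 : ℝ) (hl2 : ∀ j : Fin n, j ≠ j0 → |lam j| ≤ l2)
    (hl2nonneg : 0 ≤ l2) (hl2lt : l2 < 1)
    (u v : Fin n) (T : ℕ) :
    ∑ t ∈ Finset.Icc 1 T, (W ^ t) u v / t ≤
      (1 / n) * (∑ t ∈ Finset.Icc 1 T, (1 : ℝ) / t) -
        (∑ j : Fin n, Real.log (1 - (if j = j0 then 0 else lam j)) •
          Matrix.vecMulVec (phi j) (phi j)) u v +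
        l2 ^ T * n / (1 - l2) := by
  set mu : Fin n → ℝ := fun j => if j = j0 then 0 else lam j
  set err : Fin n → ℝ := fun j => ∑ t ∈ Icc 1 T, lam j ^ t / t + Real.log (1 - mu j)
  have hsplit : ∑ t ∈ Icc 1 T, (W ^ t) u v / t +
      (∑ j, Real.log (1 - mu j) • vecMulVec (phi j) (phi j)) u v =
      ∑ j, phi j u * phi j v * err j := by
    rw [hspec, ← spectralSum, ← spectralSum, sum_Icc_spectralSum_pow_apply_div horth,
      spectralSum_apply, ← sum_add_distrib]
    exact sum_congr rfl fun j _ => by ring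
  have hj0 : phi j0 u * phi j0 v * err j0 = 1 / n * ∑ t ∈ Icc 1 T, (1 : ℝ) / t := by
    simp only [err, mu, hphi0, hl0, if_pos, one_pow, sub_zero, Real.log_one, add_zero]
    rw [div_mul_div_comm, one_mul, Real.mul_self_sqrt n.cast_nonneg]
  have hjne (j : Fin n) (hj : j ∈ univ.erase j0) :
      phi j u * phi j v * err j ≤ l2 ^ T / (1 - l2) := by
    have hne := ne_of_mem_erase hj
    simpa only [err, mu, if_neg hne] using
      mul_apply_mul_sum_Icc_pow_div_add_log_le (by simp [horth]) u v (hl2 j hne) hl2lt T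
  have hrest : ∑ j ∈ univ.erase j0, phi j u * phi j v * err j ≤ l2 ^ T * n / (1 - l2) :=
    calc _ ≤ ∑ _j ∈ univ.erase j0, l2 ^ T / (1 - l2) := sum_le_sum hjne
      _ ≤ n * (l2 ^ T / (1 - l2)) := by
        rw [sum_const, nsmul_eq_mul]
        gcongr
        exact_mod_cast (card_erase_le).trans (card_fin n).le
      _ = _ := by ring
  rw [← add_sum_erase univ (fun j => phi j u * phi j v * err j) (mem_univ j0), hj0] at hsplit
  linarith

open Matrix in
theorem walk_partial_sum_bound (n : ℕ) [NeZero n]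
    (W : Matrix (Fin n) (Fin n) ℝ) (lam : Fin n → ℝ)
    (phi : Fin n → Fin n → ℝ) (j0 : Fin n)
    (hsym : W.IsSymm)
    (hspec : W = ∑ j : Fin n, lam j • Matrix.vecMulVec (phi j) (phi j))
    (horth : ∀ j j' : Fin n, phi j ⬝ᵥ phi j' = if j = j' then (1 : ℝ) else 0)
    (hl0 : lam j0 = 1)
    (hphi0 : phi j0 = fun _ => 1 / Real.sqrt n)
    (hl : ∀ j : Fin n, j ≠ j0 → |lam j| < 1)
    (l2 : ℝ) (hl2 : ∀ j : Fin n, j ≠ j0 → |lam j| ≤ l2)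
    (hl2nonneg : 0 ≤ l2) (hl2lt : l2 < 1)
    (u v : Fin n) (T : ℕ) (hT : 1 ≤ T) :
    ∑ t ∈ Finset.Icc 1 T, (W ^ t) u v / t ≤
      (1 / n) * (∑ t ∈ Finset.Icc 1 T, (1 : ℝ) / t) -
        (∑ j : Fin n, Real.log (1 - (if j = j0 then 0 else lam j)) •
          Matrix.vecMulVec (phi j) (phi j)) u v +
        l2 ^ T * n / (1 - l2) :=
  walk_partial_sum_bound_general n W lam phi j0 hspec horth hl0 hphi0 l2 hl2 hl2nonneg hl2lt u v T
end

section
/- For the star graph with transition matrix W = A/(n−1) and vertices u, v with exactly one of them the center (u = 1 xor v = 1), the series ∑_{p=1}^∞ (W^p)_{uv}/p is bounded above by (1/(2√(n−1)))·ln((√(n−1)+1)/(√(n−1)−1)) for n ≥ 3. -/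
/-!
The star is the complete bipartite graph `K_{1,n-1}`: its weighted adjacency matrix is
`W = e gᵀ + g eᵀ` with `e` the centre indicator, `g = c · (leaf indicator)` and `e ⬝ g = 0`,
so `W³ = (e ⬝ e)(g ⬝ g) W = (n-1)c² W`, which is `c W` for `c = 1/(n-1)`. Hence
`W^(2k+1) = c^k W` and `W^(2k+2) = c^k W²`, and `W²` vanishes between the centre and a leaf. The
series therefore only sees odd powers and equals `x · artanh x` with `x = 1/√(n-1)`, i.e. the
bound holds with equality.
-/

open Matrix

section PowThree

variable {R A : Type*} [CommSemiring R] [Semiring A] [Algebra R A] {M : A} {c : R}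

theorem pow_two_mul_add_one_eq_smul_of_pow_three (h : M ^ 3 = c • M) (k : ℕ) :
    M ^ (2 * k + 1) = c ^ k • M := by
  induction k with
  | zero => simp
  | succ k ih =>
    rw [show 2 * (k + 1) + 1 = 2 * k + 1 + 2 by ring, pow_add, ih, smul_mul_assoc,
      ← pow_succ', h, smul_smul, pow_succ]

theorem pow_two_mul_add_two_eq_smul_of_pow_three (h : M ^ 3 = c • M) (k : ℕ) :
    M ^ (2 * k + 2) = c ^ k • M ^ 2 := by
  rw [pow_succ, pow_two_mul_add_one_eq_smul_of_pow_three h, smul_mul_assoc, ← pow_two]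

end PowThree

section Bipartite

variable {ι R : Type*} [Fintype ι] [DecidableEq ι] [CommSemiring R] {e f : ι → R}

theorem vecMulVec_add_vecMulVec_sq (hef : e ⬝ᵥ f = 0) :
    (vecMulVec e f + vecMulVec f e) ^ 2 =
      vecMulVec e ((f ⬝ᵥ f) • e) + vecMulVec f ((e ⬝ᵥ e) • f) := by
  rw [sq, add_mul, mul_add, mul_add, vecMulVec_mul_vecMulVec, vecMulVec_mul_vecMulVec,
    vecMulVec_mul_vecMulVec, vecMulVec_mul_vecMulVec, dotProduct_comm f e, hef]
  simp only [zero_smul, vecMulVec_zero, add_zero, zero_add]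

theorem vecMulVec_add_vecMulVec_pow_three (hef : e ⬝ᵥ f = 0) :
    (vecMulVec e f + vecMulVec f e) ^ 3 =
      ((e ⬝ᵥ e) * (f ⬝ᵥ f)) • (vecMulVec e f + vecMulVec f e) := by
  rw [pow_succ, vecMulVec_add_vecMulVec_sq hef, add_mul, mul_add, mul_add,
    vecMulVec_mul_vecMulVec, vecMulVec_mul_vecMulVec, vecMulVec_mul_vecMulVec,
    vecMulVec_mul_vecMulVec]
  simp [smul_dotProduct, dotProduct_comm f e, hef, vecMulVec_smul, mul_comm]

end Bipartite

section Star

variable {R : Type*} [CommRing R] (n : ℕ) [NeZero n]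

def starMatrix (c : R) : Matrix (Fin n) (Fin n) R :=
  of fun u v => if (u = 0 ∨ v = 0) ∧ u ≠ v then c else 0

def starLeafVec (c : R) : Fin n → R := fun i => if i = 0 then 0 else c

variable {n}

theorem starMatrix_eq_vecMulVec (c : R) :
    starMatrix n c = vecMulVec (Pi.single 0 1) (starLeafVec n c) +
      vecMulVec (starLeafVec n c) (Pi.single 0 1) := by
  ext u v
  by_cases hu : u = 0 <;> by_cases hv : v = 0 <;>
    simp [starMatrix, starLeafVec, vecMulVec_apply, hu, hv, eq_comm]

theorem single_dotProduct_starLeafVec (c : R) : Pi.single 0 1 ⬝ᵥ starLeafVec n c = 0 := by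
  simp [single_dotProduct, starLeafVec]

theorem starLeafVec_dotProduct_self (c : R) :
    starLeafVec n c ⬝ᵥ starLeafVec n c = ((n : R) - 1) * c ^ 2 := by
  simp [dotProduct, starLeafVec, Finset.sum_ite, Finset.filter_ne', Nat.cast_pred (NeZero.pos n),
    sq]

theorem starMatrix_pow_three (c : R) :
    starMatrix n c ^ 3 = (((n : R) - 1) * c ^ 2) • starMatrix n c := by
  rw [starMatrix_eq_vecMulVec, vecMulVec_add_vecMulVec_pow_three (single_dotProduct_starLeafVec c),
    starLeafVec_dotProduct_self, single_dotProduct, Pi.single_eq_same, one_mul, one_mul]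

variable {u v : Fin n}

theorem starMatrix_pow_two_mul_add_one_apply (c : R) (huv : (u = 0 ∧ v ≠ 0) ∨ (u ≠ 0 ∧ v = 0))
    (k : ℕ) : (starMatrix n c ^ (2 * k + 1)) u v = (((n : R) - 1) * c ^ 2) ^ k * c := by
  rw [pow_two_mul_add_one_eq_smul_of_pow_three (starMatrix_pow_three c), Matrix.smul_apply,
    smul_eq_mul]
  rcases huv with ⟨hu, hv⟩ | ⟨hu, hv⟩ <;> simp [starMatrix, hu, hv, eq_comm]

theorem starMatrix_pow_two_mul_add_two_apply (c : R) (huv : (u = 0 ∧ v ≠ 0) ∨ (u ≠ 0 ∧ v = 0))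
    (k : ℕ) : (starMatrix n c ^ (2 * k + 2)) u v = 0 := by
  rw [pow_two_mul_add_two_eq_smul_of_pow_three (starMatrix_pow_three c), starMatrix_eq_vecMulVec,
    vecMulVec_add_vecMulVec_sq (single_dotProduct_starLeafVec c)]
  rcases huv with ⟨hu, hv⟩ | ⟨hu, hv⟩ <;> simp [starLeafVec, vecMulVec_apply, hu, hv]

end Star

theorem Real.hasSum_pow_two_mul_add_one_div {x : ℝ} (hx : |x| < 1) :
    HasSum (fun k : ℕ => x ^ (2 * k + 1) / (2 * k + 1)) (log ((1 + x) / (1 - x)) / 2) := by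
  have h1x : 0 < 1 + x := by linarith [neg_abs_le x]
  have h1x' : 0 < 1 - x := by linarith [le_abs_self x]
  rw [log_div h1x.ne' h1x'.ne']
  have hterm : (fun k : ℕ => x ^ (2 * k + 1) / (2 * k + 1)) =
      fun k : ℕ => 2 * (1 / (2 * k + 1)) * x ^ (2 * k + 1) / 2 := by
    ext k; ring
  rw [hterm]
  exact (hasSum_log_sub_log_of_abs_lt_one hx).div_const 2

theorem hasSum_starMatrix_pow_div {n : ℕ} [NeZero n] {u v : Fin n} {x : ℝ} (hx : |x| < 1)
    (hnx : ((n : ℝ) - 1) * x ^ 2 = 1) (huv : (u = 0 ∧ v ≠ 0) ∨ (u ≠ 0 ∧ v = 0)) :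
    HasSum (fun p : ℕ => (starMatrix n (x ^ 2) ^ (p + 1)) u v / (p + 1))
      (x * (Real.log ((1 + x) / (1 - x)) / 2)) := by
  rw [← add_zero (x * _)]
  refine HasSum.even_add_odd ?_ ?_
  · have hodd (k : ℕ) : (starMatrix n (x ^ 2) ^ (2 * k + 1)) u v / ((2 * k : ℕ) + 1 : ℝ) =
        x * (x ^ (2 * k + 1) / (2 * k + 1)) := by
      rw [starMatrix_pow_two_mul_add_one_apply _ huv, show ((n : ℝ) - 1) * (x ^ 2) ^ 2 = x ^ 2 by
        linear_combination x ^ 2 * hnx]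
      push_cast
      ring
    simpa only [hodd] using (Real.hasSum_pow_two_mul_add_one_div hx).mul_left x
  · simp [starMatrix_pow_two_mul_add_two_apply _ huv]

theorem star_center_privacy (n : ℕ) (hn : 3 ≤ n) [NeZero n]
    (A W : Matrix (Fin n) (Fin n) ℝ)
    (hA : ∀ u v : Fin n, A u v = if (u = 0 ∨ v = 0) ∧ u ≠ v then 1 else 0)
    (hW : W = ((n : ℝ) - 1)⁻¹ • A)
    (u v : Fin n) (huv : (u = 0 ∧ v ≠ 0) ∨ (u ≠ 0 ∧ v = 0)) :
    (∑' p : ℕ, (W ^ (p + 1)) u v / (p + 1)) ≤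
      (2 * Real.sqrt ((n : ℝ) - 1))⁻¹ *
        Real.log ((Real.sqrt ((n : ℝ) - 1) + 1) / (Real.sqrt ((n : ℝ) - 1) - 1)) := by
  have hn' : (2 : ℝ) ≤ n - 1 := by
    have : (3 : ℝ) ≤ n := by exact_mod_cast hn
    linarith
  set s := Real.sqrt ((n : ℝ) - 1)
  have hs : 1 < s := by rw [Real.lt_sqrt zero_le_one]; linarith
  have hcs : ((n : ℝ) - 1)⁻¹ = s⁻¹ ^ 2 := by rw [inv_pow, Real.sq_sqrt (by linarith)]
  have hWstar : W = starMatrix n (s⁻¹ ^ 2) := by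
    ext i j
    simp [hW, hA, starMatrix, hcs]
  have hx : |s⁻¹| < 1 := by
    rw [abs_inv, abs_of_pos (by linarith)]
    exact inv_lt_one_of_one_lt₀ hs
  have hnx : ((n : ℝ) - 1) * s⁻¹ ^ 2 = 1 := by rw [← hcs]; field_simp
  have hfrac : (1 + s⁻¹) / (1 - s⁻¹) = (s + 1) / (s - 1) := by field_simp
  rw [hWstar, (hasSum_starMatrix_pow_div hx hnx huv).tsum_eq, hfrac]
  apply le_of_eq
  ring
end

section
/- For any n ≥ 2 and x = 1/√(n−1) ∈ (0,1] with n ≥ 3 so that x < 1, the bound (1/(2√(n−1)))·ln((√(n−1)+1)/(√(n−1)−1)) is at least −(1/(n−1))·ln(1 − 1/(n−1)); i.e., in the star graph the privacy loss bound involving the center is larger (by roughly a factor √(n−1)) than the leaf-to-leaf bound, and asymptotically the center bound is Θ(1/(n)) while the leaf-to-leaf bound is Θ(1/n²) as n → ∞. -/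
/-!
Write `m = n - 1` and `s = √m`. Both bounds are compared with `1 / m`: the leaf bound is at most
`1 / m` because `-log (1 - 1/m) ≤ 1 / (m - 1) ≤ 1` once `m ≥ 2`, and the center bound is at least
`1 / m` because `log ((s + 1) / (s - 1)) = 2 artanh (1 / s) ≥ 2 / s`. The limits follow from
`t * log (1 + a / t) → a` as `t → ∞`, applied with `t = s`, `a = ±1` and with `t = m`, `a = -1`.
-/

open Real Filter Topology

namespace StarGraph

-- The paper's bounds `B₁(n)` and `B₂(n)`, as functions of `m = n - 1`.
noncomputable def centerBound (m : ℝ) : ℝ := 1 / (2 * √m) * log ((√m + 1) / (√m - 1))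

noncomputable def leafBound (m : ℝ) : ℝ := -(1 / m) * log (1 - 1 / m)

lemma neg_log_one_sub_le_div {t : ℝ} (ht : t < 1) : -log (1 - t) ≤ t / (1 - t) := by
  have h := one_sub_inv_le_log_of_pos (sub_pos.mpr ht)
  have : 1 - (1 - t)⁻¹ = -(t / (1 - t)) := by field_simp [(sub_pos.mpr ht).ne']; ring
  linarith

lemma two_mul_le_log_one_add_div_one_sub {x : ℝ} (hx₀ : 0 ≤ x) (hx₁ : x < 1) :
    2 * x ≤ log ((1 + x) / (1 - x)) := by
  have hsum := hasSum_log_sub_log_of_abs_lt_one (abs_lt.mpr ⟨by linarith, hx₁⟩)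
  rw [← log_div (by linarith) (by linarith)] at hsum
  simpa using le_hasSum hsum 0 fun k _ => by positivity

lemma two_div_le_log_add_one_div_sub_one {s : ℝ} (hs : 1 < s) :
    2 / s ≤ log ((s + 1) / (s - 1)) := by
  have h := two_mul_le_log_one_add_div_one_sub (inv_nonneg.mpr (by linarith : (0 : ℝ) ≤ s))
    (inv_lt_one_of_one_lt₀ hs)
  have : (1 + s⁻¹) / (1 - s⁻¹) = (s + 1) / (s - 1) := by
    field_simp
  rwa [this, ← div_eq_mul_inv] at h

lemma leafBound_le_inv {m : ℝ} (hm : 2 ≤ m) : leafBound m ≤ 1 / m := by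
  have h := neg_log_one_sub_le_div (t := 1 / m) (by rw [div_lt_one] <;> linarith)
  have hratio : 1 / m / (1 - 1 / m) ≤ 1 := by
    rw [div_le_one (by rw [sub_pos, div_lt_one] <;> linarith), le_sub_iff_add_le,
      ← add_div, div_le_one] <;> linarith
  calc leafBound m = 1 / m * -log (1 - 1 / m) := by rw [leafBound]; ring
    _ ≤ 1 / m * 1 := by gcongr; exact h.trans hratio
    _ = 1 / m := mul_one _

lemma inv_le_centerBound {m : ℝ} (hm : 1 < m) : 1 / m ≤ centerBound m := by
  have hs : 1 < √m := by rwa [lt_sqrt zero_le_one, one_pow]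
  calc 1 / m = 1 / (2 * √m) * (2 / √m) := by
        field_simp
        rw [sq_sqrt (by linarith)]
    _ ≤ centerBound m := by
        rw [centerBound]; gcongr; exact two_div_le_log_add_one_div_sub_one hs

lemma leafBound_le_centerBound {m : ℝ} (hm : 2 ≤ m) : leafBound m ≤ centerBound m :=
  (leafBound_le_inv hm).trans (inv_le_centerBound (by linarith))

lemma tendsto_mul_log_add_one_div_sub_one :
    Tendsto (fun s => s * log ((s + 1) / (s - 1))) atTop (𝓝 2) := by
  have h := (tendsto_mul_log_one_add_div_atTop 1).sub (tendsto_mul_log_one_add_div_atTop (-1))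
  rw [sub_neg_eq_add, one_add_one_eq_two] at h
  refine h.congr' ?_
  filter_upwards [eventually_gt_atTop 1] with s hs
  have hs₀ : 0 < s := by linarith
  have hpos : 0 < 1 + -1 / s := by
    rw [neg_div, ← sub_eq_add_neg, sub_pos, div_lt_one hs₀]; exact hs
  rw [← mul_sub, ← log_div (by positivity) hpos.ne']
  have hs₁ : s - 1 ≠ 0 := by linarith
  congr 2
  rw [div_eq_div_iff hpos.ne' hs₁]
  field_simp
  ring

lemma tendsto_mul_centerBound : Tendsto (fun m => m * centerBound m) atTop (𝓝 1) := by
  have h := (tendsto_mul_log_add_one_div_sub_one.comp tendsto_sqrt_atTop).const_mul (1 / 2)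
  rw [one_div_mul_eq_div, div_self two_ne_zero] at h
  refine h.congr' ?_
  filter_upwards [eventually_gt_atTop 0] with m hm
  have hs : 0 < √m := sqrt_pos.mpr hm
  simp only [Function.comp_apply, centerBound]
  field_simp
  rw [sq_sqrt hm.le]
  ring

lemma tendsto_sq_mul_leafBound : Tendsto (fun m => m ^ 2 * leafBound m) atTop (𝓝 1) := by
  have h := (tendsto_mul_log_one_add_div_atTop (-1)).neg
  rw [neg_neg] at h
  refine h.congr' ?_
  filter_upwards [eventually_ne_atTop 0] with m hm
  rw [leafBound, neg_div, ← sub_eq_add_neg]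
  field_simp

lemma tendsto_natCast_pow_mul_comp_sub_one {f : ℝ → ℝ} {L : ℝ} (k : ℕ)
    (hf : Tendsto (fun m => m ^ k * f m) atTop (𝓝 L)) :
    Tendsto (fun n : ℕ => (n : ℝ) ^ k * f (n - 1)) atTop (𝓝 L) := by
  have hsub : Tendsto (fun n : ℕ => (n : ℝ) - 1) atTop atTop :=
    tendsto_atTop_add_const_right _ _ tendsto_natCast_atTop_atTop
  have h := ((tendsto_natCast_div_add_atTop (-1 : ℝ)).pow k).mul (hf.comp hsub)
  rw [one_pow, one_mul] at h
  refine h.congr' ?_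
  filter_upwards [eventually_ge_atTop 2] with n hn
  have hn' : (n : ℝ) - 1 ≠ 0 := by
    have : (2 : ℝ) ≤ n := by exact_mod_cast hn
    linarith
  rw [Function.comp_apply, ← sub_eq_add_neg, div_pow, ← mul_assoc,
    div_mul_cancel₀ _ (pow_ne_zero k hn')]

end StarGraph

open StarGraph in
theorem star_bounds_comparison :
    (∀ n : ℕ, 3 ≤ n →
      -((1 : ℝ) / ((n : ℝ) - 1)) * Real.log (1 - 1 / ((n : ℝ) - 1)) ≤
        (1 / (2 * Real.sqrt ((n : ℝ) - 1))) *
          Real.log ((Real.sqrt ((n : ℝ) - 1) + 1) / (Real.sqrt ((n : ℝ) - 1) - 1))) ∧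
    Filter.Tendsto (fun n : ℕ => (n : ℝ) *
        ((1 / (2 * Real.sqrt ((n : ℝ) - 1))) *
          Real.log ((Real.sqrt ((n : ℝ) - 1) + 1) / (Real.sqrt ((n : ℝ) - 1) - 1))))
      Filter.atTop (nhds 1) ∧
    Filter.Tendsto (fun n : ℕ => (n : ℝ) ^ 2 *
        (-((1 : ℝ) / ((n : ℝ) - 1)) * Real.log (1 - 1 / ((n : ℝ) - 1))))
      Filter.atTop (nhds 1) := by
  refine ⟨fun n hn => leafBound_le_centerBound ?_, ?_,
    tendsto_natCast_pow_mul_comp_sub_one 2 tendsto_sq_mul_leafBound⟩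
  · have : (3 : ℝ) ≤ n := by exact_mod_cast hn
    linarith
  · have h := tendsto_natCast_pow_mul_comp_sub_one 1 (f := centerBound)
      (by simpa only [pow_one] using tendsto_mul_centerBound)
    simp only [pow_one] at h
    exact h
end
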